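/- Let E be a real normed vector space, g : E → E Lipschitz with constant K ≥ 0 and uniformly bounded by G ≥ 0 (‖g(θ)‖ ≤ G for all θ), and η ≥ 0. With U(θ) = θ − η·g(θ) and V(θ) = θ + η·g(θ), for every T ≥ 1 and every θ ∈ E the T-step round trip satisfies ‖V^[T](U^[T](θ)) − θ‖ ≤ K·η²·G·∑_{i=0}^{T−1}(1 + ηK)^i, and hence ‖V^[T](U^[T](θ)) − θ‖ ≤ T·(1 + ηK)^{T−1}·K·η²·G. (The quantitative form of the training-trajectory time-reversal MR bound ‖θ_T − θ̃_T‖ ≤ c·η²·T.) -/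
import Mathlib


theorem stmt_4 {E : Type*} [NormedAddCommGroup E] [NormedSpace ℝ E]
    (g : E → E) (K G : ℝ) (hK : 0 ≤ K) (hG : 0 ≤ G)
    (hLip : ∀ x y : E, ‖g x - g y‖ ≤ K * ‖x - y‖)
    (hBdd : ∀ θ : E, ‖g θ‖ ≤ G)
    (η : ℝ) (hη : 0 ≤ η)
    (U V : E → E)
    (hU : ∀ θ, U θ = θ - η • g θ)
    (hV : ∀ θ, V θ = θ + η • g θ) :
    ∀ T : ℕ, 1 ≤ T → ∀ θ : E,
      ‖V^[T] (U^[T] θ) - θ‖ ≤ K * η ^ 2 * G * ∑ i ∈ Finset.range T, (1 + η * K) ^ i ∧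
      ‖V^[T] (U^[T] θ) - θ‖ ≤ (T : ℝ) * (1 + η * K) ^ (T - 1) * K * η ^ 2 * G := by
  have hVlip : ∀ x y : E, ‖V x - V y‖ ≤ (1 + η * K) * ‖x - y‖ := by
    intro x y
    rw [hV, hV]
    have h1 : x + η • g x - (y + η • g y) = (x - y) + η • (g x - g y) := by
      rw [smul_sub]; abel
    rw [h1]
    calc ‖(x - y) + η • (g x - g y)‖ ≤ ‖x - y‖ + ‖η • (g x - g y)‖ := norm_add_le _ _
    _ ≤ ‖x - y‖ + η * (K * ‖x - y‖) := by
        rw [norm_smul, Real.norm_of_nonneg hη]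
        gcongr
        exact hLip x y
    _ = (1 + η * K) * ‖x - y‖ := by ring
  have hstep : ∀ θ : E, ‖V (U θ) - θ‖ ≤ K * η ^ 2 * G := by
    intro θ
    have h1 : V (U θ) - θ = η • (g (U θ) - g θ) := by
      rw [hV, hU, smul_sub]; abel
    rw [h1, norm_smul, Real.norm_of_nonneg hη]
    have h2 : ‖g (U θ) - g θ‖ ≤ K * (η * G) := by
      refine (hLip _ _).trans ?_
      have h3 : U θ - θ = -(η • g θ) := by rw [hU]; abel
      rw [h3, norm_neg, norm_smul, Real.norm_of_nonneg hη]
      gcongr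
      exact hBdd θ
    calc η * ‖g (U θ) - g θ‖ ≤ η * (K * (η * G)) := by gcongr
    _ = K * η ^ 2 * G := by ring
  have main : ∀ n : ℕ, ∀ θ : E,
      ‖V^[n] (U^[n] θ) - θ‖ ≤ K * η ^ 2 * G * ∑ i ∈ Finset.range n, (1 + η * K) ^ i := by
    intro n
    induction n with
    | zero => intro θ; simp
    | succ n ih =>
      intro θ
      rw [Function.iterate_succ_apply' V, Function.iterate_succ_apply U]
      calc ‖V (V^[n] (U^[n] (U θ))) - θ‖
          ≤ ‖V (V^[n] (U^[n] (U θ))) - V (U θ)‖ + ‖V (U θ) - θ‖ :=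
            norm_sub_le_norm_sub_add_norm_sub _ _ _
      _ ≤ (1 + η * K) * (K * η ^ 2 * G * ∑ i ∈ Finset.range n, (1 + η * K) ^ i)
            + K * η ^ 2 * G := by
          refine add_le_add ?_ (hstep θ)
          refine (hVlip _ _).trans ?_
          have hpos : (0:ℝ) ≤ 1 + η * K := by positivity
          exact mul_le_mul_of_nonneg_left (ih (U θ)) hpos
      _ = K * η ^ 2 * G * ∑ i ∈ Finset.range (n + 1), (1 + η * K) ^ i := by
          rw [geom_sum_succ]
          ring
  intro T hT θ
  refine ⟨main T θ, (main T θ).trans ?_⟩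
  have hone : (1:ℝ) ≤ 1 + η * K := by nlinarith
  have hb : ∑ i ∈ Finset.range T, (1 + η * K) ^ i ≤ (T : ℝ) * (1 + η * K) ^ (T - 1) := by
    calc ∑ i ∈ Finset.range T, (1 + η * K) ^ i
        ≤ ∑ _i ∈ Finset.range T, (1 + η * K) ^ (T - 1) := by
          apply Finset.sum_le_sum
          intro i hi
          exact pow_le_pow_right₀ hone (by have := Finset.mem_range.mp hi; omega)
    _ = (T : ℝ) * (1 + η * K) ^ (T - 1) := by
          rw [Finset.sum_const, Finset.card_range, nsmul_eq_mul]
  calc K * η ^ 2 * G * ∑ i ∈ Finset.range T, (1 + η * K) ^ i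
      ≤ K * η ^ 2 * G * ((T : ℝ) * (1 + η * K) ^ (T - 1)) := by
        apply mul_le_mul_of_nonneg_left hb (by positivity)
  _ = (T : ℝ) * (1 + η * K) ^ (T - 1) * K * η ^ 2 * G := by ring
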